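/- arXiv:1710.09969 — 2 statements merged into one kernel-verified Lean document; each statement's English description precedes it below -/
import Mathlib

section
/- Let π: S^1 → S^1 be the p-fold covering map z ↦ z^p. If a chord diagram D is p-colorable (its intersection graph admits a proper p-coloring), then D admits a lift D̃ under π (a chord diagram on the covering circle with π(D̃) = D as multisets of chords) whose chords are pairwise non-intersecting (i.e., D̃ is 1-colorable). -/
/-!  The circle `S¹` is modelled as `AddCircle (1 : ℝ) = ℝ/ℤ`, with its circular order.
A chord is an (ordered) pair of distinct points; a chord diagram with `n` chords is a
map `Fin n → S¹ × S¹` whose `2n` legs are pairwise distinct.  The `p`-fold covering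
map `S¹ → S¹` is `x ↦ p • x`. -/

instance : Fact ((0:ℝ) < 1) := ⟨one_pos⟩

/-- The circle `ℝ/ℤ`. -/
abbrev 𝕊 : Type := AddCircle (1 : ℝ)

/-- The legs of the chord diagram `D`. -/
def legs {n : ℕ} (D : Fin n → 𝕊 × 𝕊) : Fin n × Bool → 𝕊 :=
  fun p => if p.2 then (D p.1).1 else (D p.1).2

/-- `D` is a chord diagram: all `2n` endpoints of its chords are pairwise distinct. -/
def IsChordDiagram {n : ℕ} (D : Fin n → 𝕊 × 𝕊) : Prop :=
  Function.Injective (legs D)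

/-- The chords `{a,b}` and `{c,d}` intersect: the four points occur in alternating
order around the circle. -/
def CrossesPts (a b c d : 𝕊) : Prop :=
  (sbtw a c b ∧ sbtw b d a) ∨ (sbtw a d b ∧ sbtw b c a)

/-- Two chords, given as pairs of points, intersect. -/
def CrossPair (s t : 𝕊 × 𝕊) : Prop := CrossesPts s.1 s.2 t.1 t.2

/-- `E` is a lift of the chord diagram `D` under the `p`-fold covering `x ↦ p • x`:
each leg of `E` is a preimage of the corresponding leg of `D`. -/
def IsLift (p : ℕ) {n : ℕ} (D E : Fin n → 𝕊 × 𝕊) : Prop :=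
  ∀ i, p • (E i).1 = (D i).1 ∧ p • (E i).2 = (D i).2

/-! Represent points of the circle by reals in `[0, 1)`; the circular order of `ℝ/ℤ` is then
the cyclic order obtained by looping the linear order of `[0, 1)` around. Lift a leg `t` of a
chord of colour `k` to `(t + k) / p`, a point of the arc `[k/p, (k+1)/p)`. On one arc this lift
is an order embedding of `[0, 1)`, so two lifted chords of the same colour cross exactly when the
original chords do, which the colouring forbids; chords of different colours lie on disjoint
arcs, and two chords with both legs of one below both legs of the other in `[0, 1)` cannot
cross. -/

open Set

lemma CrossesPts.symm {a b c d : 𝕊} (h : CrossesPts a b c d) : CrossesPts c d a b := by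
  rcases h with ⟨hacb, hbda⟩ | ⟨hadb, hbca⟩
  · exact .inr ⟨sbtw_cyclic_right (sbtw_trans_right hbda (sbtw_cyclic_right hacb)),
      sbtw_cyclic_right (sbtw_trans_right hacb (sbtw_cyclic_right hbda))⟩
  · exact .inl ⟨sbtw_cyclic_right (sbtw_trans_right hadb (sbtw_cyclic_right hbca)),
      sbtw_cyclic_right (sbtw_trans_right hbca (sbtw_cyclic_right hadb))⟩

section CircularOrderOfReals

variable {T a b c d : ℝ}

lemma toIcoMod_eq_ite (hT : 0 < T) (ha : a ∈ Ico 0 T) (hb : b ∈ Ico 0 T) :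
    toIcoMod hT a b = if a ≤ b then b else b + T := by
  split_ifs with hab
  · exact (toIcoMod_eq_self hT).2 ⟨hab, by linarith [ha.1, hb.2]⟩
  · rw [← toIcoMod_add_right]
    exact (toIcoMod_eq_self hT).2 ⟨by linarith [ha.2, hb.1], by linarith⟩

lemma toIocMod_eq_ite (hT : 0 < T) (ha : a ∈ Ico 0 T) (hb : b ∈ Ico 0 T) :
    toIocMod hT a b = if a < b then b else b + T := by
  split_ifs with hab
  · exact (toIocMod_eq_self hT).2 ⟨hab, by linarith [ha.1, hb.2]⟩
  · rw [← toIocMod_add_right]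
    exact (toIocMod_eq_self hT).2 ⟨by linarith [ha.2, hb.1], by linarith⟩

attribute [local instance] LinearOrder.toCircularOrder

lemma btw_coe_iff_of_mem_Ico [hT : Fact (0 < T)] (ha : a ∈ Ico 0 T) (hb : b ∈ Ico 0 T)
    (hc : c ∈ Ico 0 T) : btw (a : AddCircle T) b c ↔ btw a b c := by
  rw [QuotientAddGroup.btw_coe_iff, btw_iff, toIcoMod_eq_ite hT.out ha hb,
    toIocMod_eq_ite hT.out ha hc]
  have := hb.2
  have := hc.2
  split_ifs <;> constructor <;> intro h <;> grind

lemma sbtw_coe_iff_of_mem_Ico [Fact (0 < T)] (ha : a ∈ Ico 0 T) (hb : b ∈ Ico 0 T)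
    (hc : c ∈ Ico 0 T) : sbtw (a : AddCircle T) b c ↔ sbtw a b c := by
  rw [sbtw_iff_btw_not_btw, sbtw_iff_btw_not_btw, btw_coe_iff_of_mem_Ico ha hb hc,
    btw_coe_iff_of_mem_Ico hc hb ha]

lemma StrictMono.sbtw_iff {f : ℝ → ℝ} (hf : StrictMono f) :
    sbtw (f a) (f b) (f c) ↔ sbtw a b c := by
  simp only [SBtw.sbtw, hf.lt_iff_lt]

lemma crossesPts_coe_comp_iff {f : ℝ → ℝ} (hf : StrictMono f)
    (hfI : MapsTo f (Ico 0 1) (Ico 0 1)) (ha : a ∈ Ico 0 1) (hb : b ∈ Ico 0 1)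
    (hc : c ∈ Ico 0 1) (hd : d ∈ Ico 0 1) :
    CrossesPts (f a : 𝕊) (f b) (f c) (f d) ↔ CrossesPts (a : 𝕊) b c d := by
  simp only [CrossesPts, sbtw_coe_iff_of_mem_Ico, ha, hb, hc, hd, hfI ha, hfI hb, hfI hc, hfI hd,
    hf.sbtw_iff]

lemma not_crossesPts_coe_of_lt (ha : a ∈ Ico 0 1) (hb : b ∈ Ico 0 1) (hc : c ∈ Ico 0 1)
    (hd : d ∈ Ico 0 1) (hac : a < c) (had : a < d) (hbc : b < c) (hbd : b < d) :
    ¬CrossesPts (a : 𝕊) b c d := by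
  simp only [CrossesPts, sbtw_coe_iff_of_mem_Ico, ha, hb, hc, hd]
  simp only [SBtw.sbtw]
  grind

end CircularOrderOfReals

section Arcs

variable {p : ℕ} {s t : ℝ}

/-- Lifting into the arc `L_k = [k/p, (k+1)/p)` cut out by the preimages of the base point
`0`. -/
noncomputable def toArc (k : Fin p) (t : ℝ) : ℝ := (t + k) / p

lemma strictMono_toArc (k : Fin p) : StrictMono (toArc k) :=
  fun _ _ h => div_lt_div_of_pos_right (by linarith) (Nat.cast_pos.2 k.pos)

lemma toArc_mem_Ico (k : Fin p) (ht : t ∈ Ico 0 1) :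
    toArc k t ∈ Ico (k / p : ℝ) ((k + 1) / p) := by
  have hp : (0 : ℝ) < p := Nat.cast_pos.2 k.pos
  exact ⟨div_le_div_of_nonneg_right (by linarith [ht.1]) hp.le,
    div_lt_div_of_pos_right (by linarith [ht.2]) hp⟩

lemma mapsTo_toArc (k : Fin p) : MapsTo (toArc k) (Ico 0 1) (Ico 0 1) := fun t ht => by
  obtain ⟨h0, h1⟩ := toArc_mem_Ico k ht
  have hk : (k + 1 : ℝ) ≤ p := by exact_mod_cast k.is_lt
  exact ⟨le_trans (by positivity) h0, h1.trans_le (div_le_one_of_le₀ hk (by positivity))⟩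

lemma toArc_lt_toArc {k l : Fin p} (hkl : k < l) (hs : s ∈ Ico 0 1) (ht : t ∈ Ico 0 1) :
    toArc k s < toArc l t := by
  have hkl' : (k + 1 : ℝ) ≤ l := by exact_mod_cast hkl
  calc toArc k s < (k + 1) / p := (toArc_mem_Ico k hs).2
    _ ≤ l / p := div_le_div_of_nonneg_right hkl' (Nat.cast_nonneg p)
    _ ≤ toArc l t := (toArc_mem_Ico l ht).1

lemma nsmul_coe_toArc (k : Fin p) (t : ℝ) : p • (toArc k t : 𝕊) = t := by
  have hp : (p : ℝ) ≠ 0 := Nat.cast_ne_zero.2 k.pos.ne'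
  have hk : ((k : ℝ) : 𝕊) = 0 := (AddCircle.coe_eq_zero_iff 1).2 ⟨k, by simp⟩
  rw [← AddCircle.coe_nsmul, toArc, nsmul_eq_mul, mul_div_cancel₀ _ hp, AddCircle.coe_add, hk,
    add_zero]

end Arcs

theorem exists_noncrossing_lift_of_colorable_general {p n : ℕ}
    (D : Fin n → 𝕊 × 𝕊)
    (col : Fin n → Fin p)
    (hcol : ∀ i j, CrossPair (D i) (D j) → col i ≠ col j) :
    ∃ E : Fin n → 𝕊 × 𝕊, IsLift p D E ∧
      ∀ i j, i ≠ j → ¬ CrossPair (E i) (E j) := by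
  set r : 𝕊 → ℝ := fun x => AddCircle.equivIco 1 0 x
  have hr (x : 𝕊) : r x ∈ Ico 0 1 := by simpa using (AddCircle.equivIco 1 0 x).2
  have hr_coe (x : 𝕊) : (r x : 𝕊) = x := AddCircle.coe_equivIco
  refine ⟨fun i => (toArc (col i) (r (D i).1), toArc (col i) (r (D i).2)),
    fun i => by simp only [nsmul_coe_toArc, hr_coe, and_self], fun i j _ hcross => ?_⟩
  dsimp only [CrossPair] at hcross
  have hmem (k : Fin p) (x : 𝕊) := mapsTo_toArc k (hr x)
  have hlt {k l : Fin p} (hkl : k < l) (x y : 𝕊) := toArc_lt_toArc hkl (hr x) (hr y)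
  rcases lt_trichotomy (col i) (col j) with hij | hij | hij
  · exact not_crossesPts_coe_of_lt (hmem _ _) (hmem _ _) (hmem _ _) (hmem _ _)
      (hlt hij _ _) (hlt hij _ _) (hlt hij _ _) (hlt hij _ _) hcross
  · refine hcol i j ?_ hij
    rwa [hij, crossesPts_coe_comp_iff (strictMono_toArc _) (mapsTo_toArc _) (hr _) (hr _) (hr _)
      (hr _), hr_coe, hr_coe, hr_coe, hr_coe] at hcross
  · exact not_crossesPts_coe_of_lt (hmem _ _) (hmem _ _) (hmem _ _) (hmem _ _)
      (hlt hij _ _) (hlt hij _ _) (hlt hij _ _) (hlt hij _ _) hcross.symm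

/-- If a chord diagram `D` admits a proper `p`-coloring (intersecting chords receive
distinct colors), then `D` admits a lift under the `p`-fold covering whose chords are
pairwise non-intersecting (i.e. a 1-colorable lift). -/
theorem exists_noncrossing_lift_of_colorable {p n : ℕ} (hp : 0 < p)
    (D : Fin n → 𝕊 × 𝕊) (hD : IsChordDiagram D)
    (col : Fin n → Fin p)
    (hcol : ∀ i j, CrossPair (D i) (D j) → col i ≠ col j) :
    ∃ E : Fin n → 𝕊 × 𝕊, IsLift p D E ∧
      ∀ i j, i ≠ j → ¬ CrossPair (E i) (E j) :=
  exists_noncrossing_lift_of_colorable_general D col hcol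
end

section
/- If the intersection graph of a chord diagram D is connected and D has at least two chords, then D has genus at least 1, equivalently the number of boundary components of the associated surface is at most n - 1 where n is the number of chords. -/
/-!  Combinatorial model of chord diagrams: the circle carries `m` marked points
`Fin m` in cyclic order; a chord diagram is an involution `f` of `Fin m`, whose
2-cycles `{i, f i}` are the chords (fixed points are unused marked points). -/

/-- Number of cycles (including fixed points) of a permutation of `Fin m`. -/
def cycleCount {m : ℕ} (σ : Equiv.Perm (Fin m)) : ℕ :=
  Multiset.card σ.cycleType + (m - σ.support.card)

/-- Number of boundary components of the surface obtained from the disk bounded by the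
circle by attaching a band along each chord `{i, f i}` of the involution `f`:
the boundary components are the cycles of `rotation ∘ f`. -/
def boundaryCount {m : ℕ} (f : Equiv.Perm (Fin m)) : ℕ :=
  cycleCount (finRotate m * f)

/-- Number of chords of the chord diagram given by the involution `f`. -/
def numChords {m : ℕ} (f : Equiv.Perm (Fin m)) : ℕ := f.support.card / 2

/-- Genus of the surface associated to the chord diagram (via the classification of
surfaces: `s = n + 1 - 2g`). -/
def genus {m : ℕ} (f : Equiv.Perm (Fin m)) : ℕ :=
  (numChords f + 1 - boundaryCount f) / 2

/-- `j` lies strictly inside the chord `{i, f i}`. -/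
def Inside {m : ℕ} (f : Equiv.Perm (Fin m)) (i j : Fin m) : Prop :=
  min i (f i) < j ∧ j < max i (f i)

/-- The chords `{i, f i}` and `{j, f j}` of the diagram `f` intersect: the four
endpoints are distinct and exactly one endpoint of one chord lies inside the other. -/
def Crosses {m : ℕ} (f : Equiv.Perm (Fin m)) (i j : Fin m) : Prop :=
  f i ≠ i ∧ f j ≠ j ∧ j ≠ i ∧ j ≠ f i ∧ (Inside f i j ↔ ¬ Inside f i (f j))

/-! Write `finRotate m * f = (finRotate m * (a f(a))) * (b f(b)) * f₂`, where the chords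
`{a, f a}` and `{b, f b}` cross and `f₂` is the involution formed by the remaining chords.
Right multiplication by a transposition changes the number of cycles by at most one, and lowers
it when the two points lie in different cycles. The rotation is a single cycle, so the first
transposition leaves at most two cycles; since the chords cross, `b` and `f b` lie in different
ones, so the second transposition leaves at most one; the remaining `n - 2` chords add at most
`n - 2` cycles. -/

namespace Setoid

variable {α : Type*} [Finite α] {r s : Setoid α} {a b : α}

theorem card_quotient_lt_of_le (hle : r ≤ s) (hr : ¬ r a b) (hs : s a b) :
    Nat.card (Quotient s) < Nat.card (Quotient r) := by
  have hsurj : Function.Surjective (map_of_le hle) := Quotient.ind fun x => ⟨⟦x⟧, rfl⟩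
  refine (Nat.card_le_card_of_surjective _ hsurj).lt_of_ne fun h => hr (Quotient.exact ?_)
  exact (hsurj.bijective_of_nat_card_le h.ge).1 (Quotient.sound hs : (⟦a⟧ : Quotient s) = ⟦b⟧)

theorem card_quotient_le_card_quotient_add_one
    (h : ∀ x y, s x y → r x y ∨ (r x a ∧ r b y) ∨ (r x b ∧ r a y)) :
    Nat.card (Quotient r) ≤ Nat.card (Quotient s) + 1 := by
  classical
  let g : Option (Quotient s) → Quotient r
    | none => ⟦b⟧
    | some q => q.lift (fun x => if r x b then ⟦a⟧ else ⟦x⟧) fun x y hxy => by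
        rcases h x y hxy with hxy | ⟨hxa, hby⟩ | ⟨hxb, hay⟩
        · have hxy_b : r x b ↔ r y b := ⟨r.trans (r.symm hxy), r.trans hxy⟩
          simp only [hxy_b]
          split_ifs
          exacts [rfl, Quotient.sound hxy]
        · simp only [r.symm hby, if_true]
          split_ifs
          exacts [rfl, Quotient.sound hxa]
        · simp only [hxb, if_true]
          split_ifs
          exacts [rfl, Quotient.sound hay]
  have hg : Function.Surjective g := by
    refine Quotient.ind fun z => ?_
    by_cases hz : r z b
    · exact ⟨none, Quotient.sound (r.symm hz)⟩
    · exact ⟨some ⟦z⟧, by simp [g, hz]⟩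
  simpa using Nat.card_le_card_of_surjective g hg

end Setoid

open Finset

namespace Equiv.Perm

variable {α : Type*} {σ : Perm α} {a b x y : α}

theorem SameCycle.mem_of_mapsTo [Finite α] {s : Set α} (hs : Set.MapsTo σ s s)
    (h : σ.SameCycle x y) (hx : x ∈ s) : y ∈ s := by
  obtain ⟨i, -, rfl⟩ := h.exists_pow_eq'
  clear h
  induction i with
  | zero => exact hx
  | succ i ih => rw [pow_succ', mul_apply]; exact hs ih

/-- The number of cycles of `σ`, fixed points included. -/
noncomputable def numCycles (σ : Perm α) : ℕ := Nat.card (Quotient (SameCycle.setoid σ))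

variable [DecidableEq α]

theorem SameCycle.of_mul_swap [Finite α] (h : (σ * swap a b).SameCycle x y) :
    σ.SameCycle x y ∨ (σ.SameCycle x a ∧ σ.SameCycle b y) ∨
      (σ.SameCycle x b ∧ σ.SameCycle a y) := by
  refine h.mem_of_mapsTo (s := {z | σ.SameCycle x z ∨ (σ.SameCycle x a ∧ σ.SameCycle b z) ∨
    (σ.SameCycle x b ∧ σ.SameCycle a z)}) (fun z hz => ?_) (Or.inl SameCycle.rfl)
  simp only [Set.mem_ofPred_eq, mul_apply, sameCycle_apply_right] at hz ⊢
  rcases eq_or_ne z a with rfl | hza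
  · rw [swap_apply_left]
    have := SameCycle.refl σ b
    tauto
  rcases eq_or_ne z b with rfl | hzb
  · rw [swap_apply_right]
    have := SameCycle.refl σ a
    tauto
  rwa [swap_apply_of_ne_of_ne hza hzb]

theorem sameCycle_mul_swap_of_not_sameCycle [Finite α] (h : ¬ σ.SameCycle a b) :
    (σ * swap a b).SameCycle a b := by
  -- From `(σ * swap a b) a = σ b` on, `σ * swap a b` runs along the `σ`-cycle of `b` up to `b`.
  let s : Set α := {z | σ.SameCycle b z ∧ (σ * swap a b).SameCycle a z}
  have hσb : σ b ∈ s := ⟨sameCycle_apply_right.2 SameCycle.rfl, 1, by simp⟩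
  have hs : Set.MapsTo σ s s := by
    rintro z ⟨hbz, haz⟩
    refine ⟨sameCycle_apply_right.2 hbz, ?_⟩
    rcases eq_or_ne z b with rfl | hzb
    · exact hσb.2
    have hza : z ≠ a := by rintro rfl; exact h hbz.symm
    simpa [swap_apply_of_ne_of_ne hza hzb] using (sameCycle_apply_right (f := σ * swap a b)).2 haz
  exact (SameCycle.mem_of_mapsTo hs ((sameCycle_apply_left.2 SameCycle.rfl)) hσb).2

theorem numCycles_mul_swap_le [Finite α] : numCycles (σ * swap a b) ≤ numCycles σ + 1 :=
  Setoid.card_quotient_le_card_quotient_add_one (a := a) (b := b) fun x y h =>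
    SameCycle.of_mul_swap (σ := σ * swap a b) (by rwa [mul_swap_mul_self])

theorem numCycles_mul_swap_lt [Finite α] (h : ¬ σ.SameCycle a b) :
    numCycles (σ * swap a b) < numCycles σ := by
  have hab := sameCycle_mul_swap_of_not_sameCycle h
  refine Setoid.card_quotient_lt_of_le (fun x y hxy => ?_) h hab
  rcases SameCycle.of_mul_swap (σ := σ * swap a b) (x := x) (y := y)
    (by rwa [mul_swap_mul_self]) with hxy | ⟨hxa, hby⟩ | ⟨hxb, hay⟩
  exacts [hxy, (hxa.trans hab).trans hby, (hxb.trans hab.symm).trans hay]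

section Involution

variable {h : Perm α}

theorem involutive_swap_mul (hh : Function.Involutive h) (x : α) :
    Function.Involutive (swap x (h x) * h) := by
  intro y
  have := hh x
  have := hh y
  simp only [mul_apply, swap_apply_def]
  split_ifs <;> grind

variable [Fintype α]

theorem support_swap_mul_of_involutive (hh : Function.Involutive h) (x : α) :
    (swap x (h x) * h).support = h.support \ {x, h x} := by
  ext y
  have := hh x
  have := hh y
  simp only [mem_support, mul_apply, swap_apply_def, mem_sdiff, mem_insert, mem_singleton]
  split_ifs <;> grind

theorem card_support_swap_mul_of_involutive (hh : Function.Involutive h) (hx : h x ≠ x) :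
    #(swap x (h x) * h).support + 2 = #h.support := by
  have hsub : {x, h x} ⊆ h.support := by simp [insert_subset_iff, hx, hx.symm, hh x]
  rw [support_swap_mul_of_involutive hh, ← card_pair hx.symm, card_sdiff_add_card_eq_card hsub]

theorem numCycles_mul_le_of_involutive (hh : Function.Involutive h) (σ : Perm α) :
    numCycles (σ * h) ≤ numCycles σ + #h.support / 2 := by
  induction hk : #h.support using Nat.strong_induction_on generalizing σ h with
  | _ k ih =>
  by_cases h1 : h = 1
  · simp [h1]
  obtain ⟨x, hx⟩ : ∃ x, h x ≠ x := not_forall.1 fun hfix => h1 (ext hfix)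
  have hcard := card_support_swap_mul_of_involutive hh hx
  have hrest := ih _ (by omega) (involutive_swap_mul hh x) (σ * swap x (h x)) rfl
  rw [mul_assoc, swap_mul_self_mul] at hrest
  have := numCycles_mul_swap_le (σ := σ) (a := x) (b := h x)
  omega

end Involution

theorem numCycles_eq_card_cycleType_add [Fintype α] (σ : Perm α) :
    numCycles σ = Multiset.card σ.cycleType + (Fintype.card α - #σ.support) := by
  let F : Quotient (SameCycle.setoid σ) → σ.cycleFactorsFinset ⊕ {x // σ x = x} :=
    Quotient.lift (fun x => if hx : σ x = x then .inr ⟨x, hx⟩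
      else .inl ⟨σ.cycleOf x, cycleOf_mem_cycleFactorsFinset_iff.2 (mem_support.2 hx)⟩)
      fun x y hxy => by
        by_cases hx : σ x = x
        · obtain rfl := hxy.eq_of_left hx
          rfl
        · have hy : σ y ≠ y := fun hy => hx ((SameCycle.apply_eq_self_iff hxy).2 hy)
          simp only [dif_neg hx, dif_neg hy, hxy.cycleOf_eq]
  have hF : F.Bijective := by
    constructor
    · refine Quotient.ind₂ fun x y hxy => Quotient.sound ?_
      by_cases hx : σ x = x <;> by_cases hy : σ y = y <;>
        simp only [F, Quotient.lift_mk, hx, hy, dif_pos, dif_neg, not_false_eq_true, reduceCtorEq,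
          Sum.inr.injEq, Sum.inl.injEq, Subtype.mk.injEq] at hxy
      · exact hxy ▸ SameCycle.rfl
      · exact (sameCycle_iff_cycleOf_eq_of_mem_support (mem_support.2 hx)
          (mem_support.2 hy)).2 hxy
    · rintro (⟨c, hc⟩ | ⟨x, hx⟩)
      · obtain ⟨x, hxc⟩ := (mem_cycleFactorsFinset_iff.1 hc).1.nonempty_support
        have hx : σ x ≠ x := mem_support.1 (mem_cycleFactorsFinset_support_le hc hxc)
        refine ⟨⟦x⟧, ?_⟩
        simp only [F, Quotient.lift_mk, dif_neg hx, (cycle_is_cycleOf hxc hc).symm]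
      · exact ⟨⟦x⟧, by simp only [F, Quotient.lift_mk, dif_pos hx]⟩
  rw [numCycles, Nat.card_eq_of_bijective F hF, Nat.card_sum, Nat.card_eq_fintype_card,
    Fintype.card_coe, cycleType_def, Multiset.card_map, Nat.card_eq_fintype_card,
    Fintype.card_subtype, ← card_def, support, ← card_univ,
    ← card_filter_add_card_filter_not (s := univ) (fun x => σ x = x), Nat.add_sub_cancel]

end Equiv.Perm

open Equiv Equiv.Perm

theorem val_finRotate_of_lt {m : ℕ} {z v : Fin m} (h : z < v) : (finRotate m z : ℕ) = z + 1 := by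
  cases m with
  | zero => exact z.elim0
  | succ m => exact coe_finRotate_of_ne_last (Fin.ne_last_of_lt h)

theorem mapsTo_finRotate_mul_swap_Ioc {m : ℕ} {u v : Fin m} (huv : u < v) :
    Set.MapsTo (finRotate m * swap u v) (Set.Ioc u v) (Set.Ioc u v) := by
  rintro z ⟨huz, hzv⟩
  rcases hzv.eq_or_lt with rfl | hzv
  · rw [mul_apply, swap_apply_right, Set.mem_Ioc, Fin.lt_def, Fin.le_def, val_finRotate_of_lt huz]
    rw [Fin.lt_def] at huz
    omega
  · rw [mul_apply, swap_apply_of_ne_of_ne huz.ne' hzv.ne, Set.mem_Ioc, Fin.lt_def, Fin.le_def,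
      val_finRotate_of_lt hzv]
    rw [Fin.lt_def] at huz hzv
    omega

theorem not_sameCycle_finRotate_mul_swap_of_crosses {m : ℕ} {f : Perm (Fin m)}
    (hf : Function.Involutive f) {a b : Fin m} (h : Crosses f a b) :
    ¬ (finRotate m * swap a (f a)).SameCycle b (f b) := by
  obtain ⟨hfa, -, hba, hbfa, hiff⟩ := h
  set u := min a (f a)
  set v := max a (f a)
  have hswap : swap a (f a) = swap u v := by
    rcases le_total a (f a) with h | h
    · simp only [u, v, min_eq_left h, max_eq_right h]
    · simp only [u, v, min_eq_right h, max_eq_left h, swap_comm]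
  have hinside : ∀ j, j ≠ a → j ≠ f a → (Inside f a j ↔ j ∈ Set.Ioc u v) := by
    intro j hja hjfa
    have hjv : j ≠ v := by rcases max_choice a (f a) with hv | hv <;> simpa [v, hv]
    exact and_congr_right fun _ => ⟨le_of_lt, fun hjv' => lt_of_le_of_ne hjv' hjv⟩
  have hfba : f b ≠ a := fun hfb => hbfa (by rw [← hfb, hf b])
  have hfbfa : f b ≠ f a := fun hfb => hba (f.injective hfb)
  rw [hinside b hba hbfa, hinside (f b) hfba hfbfa] at hiff
  rw [hswap]
  -- `(u, v]` is invariant, but by `hiff` exactly one of `b`, `f b` lies in it.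
  intro hsc
  have hmaps := mapsTo_finRotate_mul_swap_Ioc (min_lt_max.2 (Ne.symm hfa))
  have := hsc.mem_of_mapsTo hmaps
  have := hsc.symm.mem_of_mapsTo hmaps
  tauto

theorem cycleCount_eq_numCycles {m : ℕ} (σ : Perm (Fin m)) : cycleCount σ = numCycles σ := by
  rw [cycleCount, numCycles_eq_card_cycleType_add, Fintype.card_fin]

theorem numCycles_finRotate {m : ℕ} (hm : 2 ≤ m) : numCycles (finRotate m) = 1 := by
  rw [← cycleCount_eq_numCycles, cycleCount, cycleType_finRotate_of_le hm,
    support_finRotate_of_le hm]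
  simp

theorem boundaryCount_lt_numChords {m : ℕ} {f : Perm (Fin m)} (hf : Function.Involutive f)
    {a b : Fin m} (h : Crosses f a b) : boundaryCount f < numChords f := by
  have hmerge := numCycles_mul_swap_lt (not_sameCycle_finRotate_mul_swap_of_crosses hf h)
  obtain ⟨hfa, hfb, hba, hbfa, -⟩ := h
  have hm : 1 < m := by simpa using Fintype.one_lt_card_iff.2 ⟨a, f a, hfa.symm⟩
  set f₁ := swap a (f a) * f
  have hf₁b : f₁ b = f b :=
    swap_apply_of_ne_of_ne (fun e => hbfa (by rw [← e, hf b])) (fun e => hba (f.injective e))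
  set f₂ := swap b (f₁ b) * f₁
  have hf₁ : Function.Involutive f₁ := involutive_swap_mul hf a
  have hcard₁ : #f₁.support + 2 = #f.support := card_support_swap_mul_of_involutive hf hfa
  have hcard₂ : #f₂.support + 2 = #f₁.support :=
    card_support_swap_mul_of_involutive hf₁ (hf₁b ▸ hfb)
  have hdecomp : finRotate m * f = finRotate m * swap a (f a) * swap b (f b) * f₂ := by
    simp only [f₂, f₁, hf₁b, mul_assoc, swap_mul_self_mul]
  have hsplit := numCycles_mul_swap_le (σ := finRotate m) (a := a) (b := f a)
  have hrest : numCycles (finRotate m * swap a (f a) * swap b (f b) * f₂) ≤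
      numCycles (finRotate m * swap a (f a) * swap b (f b)) + #f₂.support / 2 :=
    numCycles_mul_le_of_involutive (involutive_swap_mul hf₁ b) _
  rw [boundaryCount, numChords, cycleCount_eq_numCycles, hdecomp]
  rw [numCycles_finRotate hm] at hsplit
  omega

/-- If the intersection graph of a chord diagram with `n ≥ 2` chords is connected,
then its genus is at least 1; equivalently the associated surface has at most
`n - 1` boundary components. -/
theorem genus_pos_of_connected {n : ℕ} (hn : 2 ≤ n) (f : Equiv.Perm (Fin (2 * n)))
    (hf : ∀ x, f (f x) = x) (hfix : ∀ x, f x ≠ x)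
    (hconn : (SimpleGraph.fromRel (fun i j => Crosses f i j)).Connected) :
    1 ≤ genus f ∧ boundaryCount f ≤ n - 1 := by
  have : Nontrivial (Fin (2 * n)) := Fin.nontrivial_iff_two_le.2 (by omega)
  obtain ⟨b, hadj⟩ := hconn.preconnected.exists_adj_of_nontrivial ⟨0, by omega⟩
  have hlt : boundaryCount f < numChords f := by
    rcases (SimpleGraph.fromRel_adj _ _ _).1 hadj |>.2 with h | h
    exacts [boundaryCount_lt_numChords hf h, boundaryCount_lt_numChords hf h]
  have hchords : numChords f = n := by
    rw [numChords, Finset.eq_univ_of_forall fun x => mem_support.2 (hfix x)]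
    simp
  rw [hchords] at hlt
  exact ⟨by rw [genus, hchords]; omega, by omega⟩
end
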